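/- arXiv:1212.0397 — 3 statements merged into one kernel-verified Lean document; each statement's English description precedes it below -/
import Mathlib

section
/- For every ℓ ≥ 1 one has 0 < a_ℓ ≤ k log ρ^{−1}, and the sequence (a_ℓ, t_ℓ) is componentwise nondecreasing in ℓ. -/
open Filter Topology

noncomputable section

/-- Traffic intensity ρ = λ / Σ μᵢ. -/
def rho (k : ℕ) (lam : ℝ) (μ : Fin k → ℝ) : ℝ := lam / ∑ i, μ i

/-- The two-dimensional marginal mgf `γ^{(2)}_{+U}(η₀, η₁)`:
for `U = {i}` it is `λ e^{η₀−(k−1)η₁} + (Σ_{j≠i} μ_j) e^{−η₁} + μ_i e^{−η₀+(k−1)η₁}`;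
for `|U| ≥ 2` it is `λ e^{η₁} + (Σ_{i∉U} μ_i) e^{−η₁} + (Σ_{i∈U} μ_i) e^{−η₀+(k−1)η₁}`. -/
def gamma2 (k : ℕ) (lam : ℝ) (μ : Fin k → ℝ) (U : Finset (Fin k)) (η₀ η₁ : ℝ) : ℝ :=
  (if U.card = 1 then lam * Real.exp (η₀ - ((k : ℝ) - 1) * η₁) else lam * Real.exp η₁)
  + (∑ j ∈ Uᶜ, μ j) * Real.exp (-η₁)
  + (∑ i ∈ U, μ i) * Real.exp (-η₀ + ((k : ℝ) - 1) * η₁)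

end

set_option maxHeartbeats 2000000

private lemma aux_pair_mono (lam m P Q : ℝ) (hlam : 0 < lam) (hm : 0 ≤ m)
    (hQ : 0 < Q) (hP : 0 < P) (hQP : Q ≤ P) (hc : m ≤ lam * P * Q) :
    lam * Q + m * Q⁻¹ ≤ lam * P + m * P⁻¹ := by
  have hdiff : (lam * P + m * P⁻¹) - (lam * Q + m * Q⁻¹)
      = (P - Q) * (lam * P * Q - m) / (P * Q) := by
    field_simp
    ring
  have h0 : 0 ≤ (P - Q) * (lam * P * Q - m) / (P * Q) :=
    div_nonneg (mul_nonneg (by linarith) (by linarith)) (mul_pos hP hQ).le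
  linarith

/-- **Monotonicity of the iteration:** for every `ℓ ≥ 1`, `0 < a_ℓ ≤ k log ρ⁻¹`, and the
sequence `(a_ℓ, t_ℓ)` is componentwise nondecreasing in `ℓ ≥ 1`. -/
theorem iteration_monotone
    (k : ℕ) (hk : 2 ≤ k) (lam : ℝ) (μ : Fin k → ℝ)
    (hlam : 0 < lam) (hμ : ∀ i, 0 < μ i)
    (hnorm : lam + ∑ i, μ i = 1)
    (hρ : rho k lam μ < 1)
    (ε : ℝ) (hε : 0 < ε)
    (hεγ : ∀ U : Finset (Fin k), U.card = 1 → gamma2 k lam μ U 0 ε < 1)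
    (a t : ℕ → ℝ)
    (ht0 : t 0 = ε)
    (ha : ∀ ℓ : ℕ, a (ℓ + 1) = sSup {η₀ : ℝ | ∃ η₁ ≤ t ℓ,
      ∀ U : Finset (Fin k), U.Nonempty → gamma2 k lam μ U η₀ η₁ < 1})
    (ht : ∀ ℓ : ℕ, t (ℓ + 1) = a (ℓ + 1) / ((k : ℝ) - 1))
    :
    ∀ ℓ : ℕ, 1 ≤ ℓ →
      (0 < a ℓ ∧ a ℓ ≤ (k : ℝ) * Real.log (rho k lam μ)⁻¹) ∧
      a ℓ ≤ a (ℓ + 1) ∧ t ℓ ≤ t (ℓ + 1) := by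
  haveI : Nonempty (Fin k) := ⟨⟨0, by omega⟩⟩
  haveI : NeZero k := ⟨by omega⟩
  have hk1 : (1:ℝ) ≤ (k:ℝ) - 1 := by
    have : (2:ℝ) ≤ (k:ℝ) := by exact_mod_cast hk
    linarith
  have hk0 : (0:ℝ) < (k:ℝ) := by linarith
  have hkm1 : (0:ℝ) < (k:ℝ) - 1 := by linarith
  have hS : (0:ℝ) < ∑ i, μ i := Finset.sum_pos (fun i _ => hμ i) Finset.univ_nonempty
  have hlamS : lam < ∑ i, μ i := by
    have h := hρ
    rw [rho, div_lt_one hS] at h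
    exact h
  set S := ∑ i, μ i with hSdef
  have hρ0 : 0 < rho k lam μ := by rw [rho]; positivity
  set L := Real.log (rho k lam μ)⁻¹ with hLdef
  have heL : Real.exp L = S / lam := by
    rw [hLdef, Real.exp_log (by positivity), rho, inv_div]
  have hemL : Real.exp (-L) = lam / S := by
    rw [Real.exp_neg, heL, inv_div]
  have hL : 0 < L := by
    rw [hLdef]
    apply Real.log_pos
    rw [one_lt_inv_iff₀]
    exact ⟨hρ0, hρ⟩
  have hkL : 0 < (k:ℝ) * L := by positivity
  -- the one-point value
  have honep : lam * Real.exp L + S * Real.exp (-L) = 1 := by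
    rw [heL, hemL]
    field_simp
    linarith [hnorm]
  -- key strict inequality along the diagonal segment
  have key_lt : ∀ y : ℝ, 0 < y → y < L → lam * Real.exp y + S * Real.exp (-y) < 1 := by
    intro y hy hyL
    have hE : (0:ℝ) < Real.exp y := Real.exp_pos y
    have h1 : 1 < Real.exp y := by
      rw [← Real.exp_zero]
      exact Real.exp_lt_exp.2 hy
    have h2 : lam * Real.exp y < S := by
      have hlt : Real.exp y < Real.exp L := Real.exp_lt_exp.2 hyL
      rw [heL] at hlt
      calc lam * Real.exp y < lam * (S / lam) := by
            exact mul_lt_mul_of_pos_left hlt hlam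
        _ = S := by field_simp
    have hEF : Real.exp y * Real.exp (-y) = 1 := by
      rw [← Real.exp_add]; simp
    have hF : (0:ℝ) < Real.exp (-y) := Real.exp_pos _
    nlinarith [mul_pos (sub_pos.2 h1) (sub_pos.2 h2)]
  -- sums over U and Uᶜ
  have hsumU : ∀ U : Finset (Fin k), (∑ j ∈ Uᶜ, μ j) + (∑ i ∈ U, μ i) = S :=
    fun U => Finset.sum_compl_add_sum U μ
  have hsum1 : ∀ U : Finset (Fin k), lam + ((∑ j ∈ Uᶜ, μ j) + (∑ i ∈ U, μ i)) = 1 := by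
    intro U; rw [hsumU]; exact hnorm
  have hC2 : ∀ U : Finset (Fin k), (0:ℝ) ≤ ∑ j ∈ Uᶜ, μ j :=
    fun U => Finset.sum_nonneg (fun i _ => (hμ i).le)
  have hC3 : ∀ U : Finset (Fin k), (0:ℝ) ≤ ∑ i ∈ U, μ i :=
    fun U => Finset.sum_nonneg (fun i _ => (hμ i).le)
  -- segment points are feasible
  have hseg : ∀ x : ℝ, 0 < x → x < (k:ℝ) * L →
      ∀ U : Finset (Fin k), U.Nonempty → gamma2 k lam μ U x (x / k) < 1 := by
    intro x hx hxkL U _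
    have hy0 : 0 < x / k := by positivity
    have hyL : x / k < L := by
      rw [div_lt_iff₀ hk0]
      linarith [hxkL]
    have e1 : x - ((k:ℝ) - 1) * (x / k) = x / k := by
      field_simp
      ring
    have e3 : -x + ((k:ℝ) - 1) * (x / k) = -(x / k) := by
      field_simp
      ring
    have hkey := key_lt (x / k) hy0 hyL
    rw [gamma2, e1, e3, ite_self]
    have : (∑ j ∈ Uᶜ, μ j) * Real.exp (-(x / k)) + (∑ i ∈ U, μ i) * Real.exp (-(x / k))
        = S * Real.exp (-(x / k)) := by
      rw [← add_mul, hsumU]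
    linarith [this, hkey]
  -- no feasible point has η₀ = k L
  have hA0 : ∀ η₁ : ℝ, ∃ U : Finset (Fin k), U.Nonempty ∧
      1 ≤ gamma2 k lam μ U ((k:ℝ) * L) η₁ := by
    intro η₁
    rcases le_or_gt L η₁ with hc | hc
    · refine ⟨Finset.univ, Finset.univ_nonempty, ?_⟩
      rw [gamma2, if_neg (by simp [Finset.card_univ]; omega)]
      rw [Finset.compl_univ, Finset.sum_empty, zero_mul, add_zero]
      have t1 : lam * Real.exp L ≤ lam * Real.exp η₁ :=
        mul_le_mul_of_nonneg_left (Real.exp_le_exp.2 hc) hlam.le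
      have t2 : S * Real.exp (-L) ≤ S * Real.exp (-((k:ℝ) * L) + ((k:ℝ) - 1) * η₁) := by
        apply mul_le_mul_of_nonneg_left _ hS.le
        apply Real.exp_le_exp.2
        nlinarith [mul_le_mul_of_nonneg_left hc (le_of_lt hkm1)]
      calc (1:ℝ) = lam * Real.exp L + S * Real.exp (-L) := honep.symm
        _ ≤ lam * Real.exp η₁ + S * Real.exp (-((k:ℝ) * L) + ((k:ℝ) - 1) * η₁) := by
            linarith
        _ = lam * Real.exp η₁ + (∑ i, μ i) * Real.exp (-((k:ℝ) * L) + ((k:ℝ) - 1) * η₁) := by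
            rw [← hSdef]
    · refine ⟨{0}, Finset.singleton_nonempty 0, ?_⟩
      rw [gamma2, if_pos (Finset.card_singleton 0), Finset.sum_singleton]
      have hcompl : ∑ j ∈ ({0}ᶜ : Finset (Fin k)), μ j = S - μ 0 := by
        have h := Finset.sum_compl_add_sum ({0} : Finset (Fin k)) μ
        rw [Finset.sum_singleton] at h
        rw [← hSdef] at h
        linarith
      rw [hcompl]
      set v := (k:ℝ) * L - ((k:ℝ) - 1) * η₁ with hv
      have hvL : L ≤ v := by nlinarith [mul_le_mul_of_nonneg_left hc.le (le_of_lt hkm1)]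
      have hμ0S : μ 0 ≤ S := Finset.single_le_sum (fun i _ => (hμ i).le) (Finset.mem_univ 0)
      have hμ0 : 0 < μ 0 := hμ 0
      -- bound the pair lam e^v + μ₀ e^{-v}
      set P := Real.exp v with hP
      set Q := Real.exp L with hQ
      have hQpos : 0 < Q := Real.exp_pos _
      have hPpos : 0 < P := Real.exp_pos _
      have hQP : Q ≤ P := Real.exp_le_exp.2 hvL
      have hQval : Q = S / lam := heL
      have hexpnegv : Real.exp (-v) = P⁻¹ := by rw [Real.exp_neg]
      have hexpnegL : Real.exp (-L) = Q⁻¹ := by rw [Real.exp_neg]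
      have hcent : μ 0 ≤ lam * Q * Q := by
        have h1 : S ≤ lam * Q * Q := by
          rw [hQval]
          have heq : lam * (S / lam) * (S / lam) = S * S / lam := by
            field_simp
          rw [heq, le_div_iff₀ hlam]
          nlinarith
        linarith
      have hcent2 : μ 0 ≤ lam * P * Q := by
        have hh : Q * (lam * Q) ≤ P * (lam * Q) :=
          mul_le_mul_of_nonneg_right hQP (mul_pos hlam hQpos).le
        linarith [hh, hcent]
      have b1 : lam * Q + μ 0 * Q⁻¹ ≤ lam * P + μ 0 * P⁻¹ :=
        aux_pair_mono lam (μ 0) P Q hlam hμ0.le hQpos hPpos hQP hcent2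
      have b2 : (S - μ 0) * Real.exp (-L) ≤ (S - μ 0) * Real.exp (-η₁) :=
        mul_le_mul_of_nonneg_left (Real.exp_le_exp.2 (by linarith)) (by linarith)
      -- the exponents in gamma2 are v and -v
      have eA : (k:ℝ) * L - ((k:ℝ) - 1) * η₁ = v := rfl
      have eB : -((k:ℝ) * L) + ((k:ℝ) - 1) * η₁ = -v := by rw [hv]; ring
      rw [eB]
      have hone : lam * Q + (S - μ 0) * Real.exp (-L) + μ 0 * Q⁻¹ = 1 := by
        rw [← hexpnegL]
        linear_combination honep
      rw [hexpnegv]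
      calc (1:ℝ) = lam * Q + (S - μ 0) * Real.exp (-L) + μ 0 * Q⁻¹ := hone.symm
        _ ≤ lam * P + (S - μ 0) * Real.exp (-η₁) + μ 0 * P⁻¹ := by linarith
  -- gamma2 scales subconvexly
  have hscale : ∀ (θ x η₁ : ℝ), 0 ≤ θ → θ ≤ 1 → ∀ U : Finset (Fin k),
      gamma2 k lam μ U (θ * x) (θ * η₁) ≤ θ * gamma2 k lam μ U x η₁ + (1 - θ) := by
    intro θ x η₁ hθ0 hθ1 U
    have econv : ∀ s : ℝ, Real.exp (θ * s) ≤ θ * Real.exp s + (1 - θ) := by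
      intro s
      have h := convexOn_exp.2 (Set.mem_univ s) (Set.mem_univ 0) hθ0
        (by linarith : (0:ℝ) ≤ 1 - θ) (by ring)
      simpa using h
    have hs1 := hsum1 U
    have hs1' : (1 - θ) * (lam + ((∑ j ∈ Uᶜ, μ j) + (∑ i ∈ U, μ i))) = 1 - θ := by
      rw [hs1]; ring
    have h2 := hC2 U
    have h3 := hC3 U
    rw [gamma2, gamma2]
    have e2 : -(θ * η₁) = θ * (-η₁) := by ring
    have e3 : -(θ * x) + ((k:ℝ) - 1) * (θ * η₁) = θ * (-x + ((k:ℝ) - 1) * η₁) := by ring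
    rw [e2, e3]
    split_ifs with hcard
    · have e1 : θ * x - ((k:ℝ) - 1) * (θ * η₁) = θ * (x - ((k:ℝ) - 1) * η₁) := by ring
      rw [e1]
      have b1 := mul_le_mul_of_nonneg_left (econv (x - ((k:ℝ) - 1) * η₁)) hlam.le
      have b2 := mul_le_mul_of_nonneg_left (econv (-η₁)) h2
      have b3 := mul_le_mul_of_nonneg_left (econv (-x + ((k:ℝ) - 1) * η₁)) h3
      linarith [b1, b2, b3, hs1']
    · have b1 := mul_le_mul_of_nonneg_left (econv η₁) hlam.le
      have b2 := mul_le_mul_of_nonneg_left (econv (-η₁)) h2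
      have b3 := mul_le_mul_of_nonneg_left (econv (-x + ((k:ℝ) - 1) * η₁)) h3
      linarith [b1, b2, b3, hs1']
  -- the feasible-η₀ set
  set A : ℝ → Set ℝ := fun τ => {η₀ : ℝ | ∃ η₁ ≤ τ,
    ∀ U : Finset (Fin k), U.Nonempty → gamma2 k lam μ U η₀ η₁ < 1} with hAdef
  have ha' : ∀ ℓ : ℕ, a (ℓ + 1) = sSup (A (t ℓ)) := ha
  -- upper bound for A
  have hBddA : ∀ τ x, x ∈ A τ → x ≤ (k:ℝ) * L := by
    intro τ x hxA
    obtain ⟨η₁, _, hall⟩ := hxA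
    by_contra hgt
    push_neg at hgt
    have hx : 0 < x := hkL.trans hgt
    set θ := ((k:ℝ) * L) / x with hθdef
    have hθ0 : 0 < θ := by positivity
    have hθ1 : θ < 1 := (div_lt_one hx).2 hgt
    obtain ⟨U, hUne, hge⟩ := hA0 (θ * η₁)
    have hθx : (k:ℝ) * L = θ * x := by
      rw [hθdef]; field_simp
    have hsc := hscale θ x η₁ hθ0.le hθ1.le U
    rw [← hθx] at hsc
    have hlt := hall U hUne
    have : gamma2 k lam μ U ((k:ℝ) * L) (θ * η₁) < 1 := by nlinarith
    linarith
  have hBdd : ∀ τ, BddAbove (A τ) := fun τ => ⟨(k:ℝ) * L, fun y hy => hBddA τ y hy⟩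
  -- membership of segment points
  have hAmem : ∀ τ x, 0 < x → x < (k:ℝ) * L → x < (k:ℝ) * τ → x ∈ A τ := by
    intro τ x h1 h2 h3
    refine ⟨x / k, ?_, hseg x h1 h2⟩
    rw [div_le_iff₀ hk0]
    nlinarith
  have hAne : ∀ τ, 0 < τ → (A τ).Nonempty := by
    intro τ hτ
    refine ⟨min ((k:ℝ) * L) ((k:ℝ) * τ) / 2, hAmem τ _ ?_ ?_ ?_⟩
    · have := lt_min hkL (mul_pos hk0 hτ)
      linarith
    · have h := min_le_left ((k:ℝ) * L) ((k:ℝ) * τ)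
      linarith [lt_min hkL (mul_pos hk0 hτ)]
    · have h := min_le_right ((k:ℝ) * L) ((k:ℝ) * τ)
      linarith [lt_min hkL (mul_pos hk0 hτ)]
  -- sSup lower bound
  have hMlb : ∀ τ, 0 < τ → min ((k:ℝ) * L) ((k:ℝ) * τ) ≤ sSup (A τ) := by
    intro τ hτ
    have hminpos : 0 < min ((k:ℝ) * L) ((k:ℝ) * τ) := lt_min hkL (mul_pos hk0 hτ)
    apply le_of_forall_lt
    intro c hc
    have hcx : max c 0 < min ((k:ℝ) * L) ((k:ℝ) * τ) := max_lt hc hminpos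
    set x := (max c 0 + min ((k:ℝ) * L) ((k:ℝ) * τ)) / 2 with hxdef
    have hx0 : 0 < x := by
      have := le_max_right c 0
      rw [hxdef]; linarith
    have hxlt : x < min ((k:ℝ) * L) ((k:ℝ) * τ) := by rw [hxdef]; linarith
    have hxmem : x ∈ A τ := hAmem τ x hx0
      (lt_of_lt_of_le hxlt (min_le_left _ _)) (lt_of_lt_of_le hxlt (min_le_right _ _))
    have hcltx : c < x := by
      have := le_max_left c 0
      rw [hxdef]; linarith
    exact hcltx.trans_le (le_csSup (hBdd τ) hxmem)
  have hMub : ∀ τ, 0 < τ → sSup (A τ) ≤ (k:ℝ) * L := fun τ hτ =>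
    csSup_le (hAne τ hτ) (fun y hy => hBddA τ y hy)
  -- monotonicity in the key sense
  have hMkey : ∀ σ τ, 0 < σ → 0 < τ → min L σ ≤ τ → sSup (A σ) ≤ sSup (A τ) := by
    intro σ τ hσ hτ hmin
    rcases le_or_gt σ τ with hc | hc
    · apply csSup_le_csSup (hBdd τ) (hAne σ hσ)
      intro y hy
      obtain ⟨η₁, hη₁, hall⟩ := hy
      exact ⟨η₁, hη₁.trans hc, hall⟩
    · have hLτ : L ≤ τ := by
        rcases le_total L σ with h | h
        · rwa [min_eq_left h] at hmin
        · linarith [min_eq_right h ▸ hmin]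
      calc sSup (A σ) ≤ (k:ℝ) * L := hMub σ hσ
        _ = min ((k:ℝ) * L) ((k:ℝ) * τ) := by
            rw [min_eq_left]
            nlinarith
        _ ≤ sSup (A τ) := hMlb τ hτ
  -- positivity of t
  have htpos : ∀ ℓ, 0 < t ℓ := by
    intro ℓ
    induction ℓ with
    | zero => rw [ht0]; exact hε
    | succ n ih =>
      rw [ht n, ha' n]
      apply div_pos _ hkm1
      have h1 := hMlb (t n) ih
      have h2 : 0 < min ((k:ℝ) * L) ((k:ℝ) * t n) := lt_min hkL (mul_pos hk0 ih)
      linarith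
  -- key step inequality
  have hkey : ∀ ℓ, min L (t ℓ) ≤ t (ℓ + 1) := by
    intro ℓ
    rw [ht ℓ, ha' ℓ]
    have h1 := hMlb (t ℓ) (htpos ℓ)
    have h2 : min L (t ℓ) * ((k:ℝ) - 1) ≤ min ((k:ℝ) * L) ((k:ℝ) * t ℓ) := by
      rcases le_total L (t ℓ) with h | h
      · rw [min_eq_left h, min_eq_left (by nlinarith : (k:ℝ) * L ≤ (k:ℝ) * t ℓ)]
        nlinarith
      · rw [min_eq_right h, min_eq_right (by nlinarith : (k:ℝ) * t ℓ ≤ (k:ℝ) * L)]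
        nlinarith [htpos ℓ]
    rw [le_div_iff₀ hkm1]
    linarith
  -- a is monotone from index 1
  have hamono : ∀ ℓ : ℕ, a (ℓ + 1) ≤ a (ℓ + 1 + 1) := by
    intro ℓ
    rw [ha' ℓ, ha' (ℓ + 1)]
    exact hMkey (t ℓ) (t (ℓ + 1)) (htpos ℓ) (htpos (ℓ + 1)) (hkey ℓ)
  -- conclusion
  intro ℓ hℓ
  obtain ⟨m, rfl⟩ : ∃ m, ℓ = m + 1 := ⟨ℓ - 1, by omega⟩
  refine ⟨⟨?_, ?_⟩, hamono m, ?_⟩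
  · rw [ha' m]
    have h1 := hMlb (t m) (htpos m)
    have h2 : 0 < min ((k:ℝ) * L) ((k:ℝ) * t m) := lt_min hkL (mul_pos hk0 (htpos m))
    linarith
  · rw [ha' m]
    exact hMub (t m) (htpos m)
  · rw [ht m, ht (m + 1)]
    rw [div_le_div_iff₀ hkm1 hkm1]
    nlinarith [hamono m]
end

section
/- The limits a_∞ = lim_{ℓ→∞} a_ℓ and t_∞ = lim_{ℓ→∞} t_ℓ satisfy a_∞ = k log ρ^{−1} and t_∞ = (k/(k−1)) log ρ^{−1}. -/
open Filter Topology

set_option maxHeartbeats 1000000 in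
/-- **Limits of the iteration:** `a_ℓ → k log ρ⁻¹` and `t_ℓ → (k/(k−1)) log ρ⁻¹`. -/
theorem iteration_limits
    (k : ℕ) (hk : 2 ≤ k) (lam : ℝ) (μ : Fin k → ℝ)
    (hlam : 0 < lam) (hμ : ∀ i, 0 < μ i)
    (hnorm : lam + ∑ i, μ i = 1)
    (hρ : rho k lam μ < 1)
    (ε : ℝ) (hε : 0 < ε)
    (hεγ : ∀ U : Finset (Fin k), U.card = 1 → gamma2 k lam μ U 0 ε < 1)
    (a t : ℕ → ℝ)
    (ht0 : t 0 = ε)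
    (ha : ∀ ℓ : ℕ, a (ℓ + 1) = sSup {η₀ : ℝ | ∃ η₁ ≤ t ℓ,
      ∀ U : Finset (Fin k), U.Nonempty → gamma2 k lam μ U η₀ η₁ < 1})
    (ht : ∀ ℓ : ℕ, t (ℓ + 1) = a (ℓ + 1) / ((k : ℝ) - 1))
    :
    Tendsto a atTop (𝓝 ((k : ℝ) * Real.log (rho k lam μ)⁻¹)) ∧
    Tendsto t atTop (𝓝 (((k : ℝ) / ((k : ℝ) - 1)) * Real.log (rho k lam μ)⁻¹)) := by
  classical
  haveI : NeZero k := ⟨by omega⟩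
  set K : ℝ := (k : ℝ) with hK
  have hK2 : (2:ℝ) ≤ K := by rw [hK]; exact_mod_cast hk
  have hKm1 : (0:ℝ) < K - 1 := by linarith
  set M : ℝ := ∑ i, μ i with hMdef
  have hM0 : 0 < M := Finset.sum_pos (fun i _ => hμ i) Finset.univ_nonempty
  have hlamM : lam < M := (div_lt_one hM0).mp hρ
  have hMlam1 : (1:ℝ) < M / lam := (one_lt_div hlam).mpr hlamM
  set L : ℝ := Real.log (M / lam) with hLdef
  have hL0 : 0 < L := Real.log_pos hMlam1
  have hexpL : Real.exp L = M / lam := Real.exp_log (by positivity)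
  have hrhoM : rho k lam μ = lam / M := rfl
  have hinv : Real.log (rho k lam μ)⁻¹ = L := by
    rw [hrhoM, inv_div]
  have hμle : ∀ i, μ i ≤ M := by
    intro i
    exact Finset.single_le_sum (fun j _ => (hμ j).le) (Finset.mem_univ i)
  -- conversion identities
  have hconv : ∀ x : ℝ, lam * Real.exp x = M * Real.exp (x - L) := by
    intro x
    rw [Real.exp_sub, hexpL]
    field_simp
  have hconv2 : ∀ x : ℝ, M * Real.exp (-x) = lam * Real.exp (L - x) := by
    intro x
    rw [Real.exp_sub, hexpL, Real.exp_neg]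
    field_simp
  have tangent : ∀ c y : ℝ, 0 ≤ c → c * (1 + y) ≤ c * Real.exp y := by
    intro c y hc
    exact mul_le_mul_of_nonneg_left (by linarith [Real.add_one_le_exp y]) hc
  -- ## Upper bound: any feasible η₀ is < K * L
  have hub : ∀ η₀ η₁ : ℝ,
      (∀ U : Finset (Fin k), U.Nonempty → gamma2 k lam μ U η₀ η₁ < 1) → η₀ < K * L := by
    intro η₀ η₁ h
    set u : ℝ := η₀ - (K - 1) * η₁ with hu
    -- singleton constraints
    have hEi : ∀ i : Fin k,
        M^2*(u - L) + (M - μ i)*lam*(L - η₁) + μ i*lam*(L - u) < 0 := by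
      intro i
      have hg := h {i} (Finset.singleton_nonempty i)
      rw [gamma2, if_pos (Finset.card_singleton i)] at hg
      have hsc : ∑ j ∈ ({i} : Finset (Fin k))ᶜ, μ j = M - μ i := by
        have h1 := Finset.sum_compl_add_sum ({i} : Finset (Fin k)) μ
        rw [Finset.sum_singleton] at h1
        rw [hMdef]; linarith
      rw [hsc, Finset.sum_singleton] at hg
      have harg : -η₀ + ((k:ℝ) - 1) * η₁ = -u := by rw [hu, ← hK]; ring
      have harg2 : η₀ - ((k:ℝ) - 1) * η₁ = u := by rw [hu, ← hK]
      rw [harg, harg2] at hg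
      -- hg : lam * exp u + (M - μ i) * exp (-η₁) + μ i * exp (-u) < 1
      have hg' : M*(lam * Real.exp u) + M*((M - μ i) * Real.exp (-η₁))
          + M*(μ i * Real.exp (-u)) < M := by nlinarith [hg, hM0]
      have t1 : M*(M*(1 + (u - L))) ≤ M*(lam * Real.exp u) := by
        rw [hconv u]
        exact mul_le_mul_of_nonneg_left (tangent M (u - L) hM0.le) hM0.le
      have t2 : (M - μ i)*lam*(1 + (L - η₁)) ≤ M*((M - μ i) * Real.exp (-η₁)) := by
        have : M*((M - μ i) * Real.exp (-η₁)) = (M - μ i)*(M * Real.exp (-η₁)) := by ring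
        rw [this, hconv2 η₁]
        have : (M - μ i)*(lam * Real.exp (L - η₁)) = ((M - μ i)*lam) * Real.exp (L - η₁) := by
          ring
        rw [this]
        have hc : 0 ≤ (M - μ i)*lam := mul_nonneg (by linarith [hμle i]) hlam.le
        exact tangent _ _ hc
      have t3 : μ i*lam*(1 + (L - u)) ≤ M*(μ i * Real.exp (-u)) := by
        have : M*(μ i * Real.exp (-u)) = μ i*(M * Real.exp (-u)) := by ring
        rw [this, hconv2 u]
        have : μ i*(lam * Real.exp (L - u)) = (μ i*lam) * Real.exp (L - u) := by ring
        rw [this]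
        exact tangent _ _ (mul_nonneg (hμ i).le hlam.le)
      nlinarith [hg', t1, t2, t3, hnorm]
    -- constraint for U = univ
    have hEJ : M*(η₁ - L) + lam*(L - u) < 0 := by
      have hg := h Finset.univ Finset.univ_nonempty
      rw [gamma2] at hg
      have hcard : ¬ (Finset.univ : Finset (Fin k)).card = 1 := by
        rw [Finset.card_univ, Fintype.card_fin]; omega
      rw [if_neg hcard, Finset.compl_univ, Finset.sum_empty, ← hMdef] at hg
      have harg : -η₀ + ((k:ℝ) - 1) * η₁ = -u := by rw [hu, ← hK]; ring
      rw [harg] at hg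
      -- hg : lam * exp η₁ + 0 * exp (-η₁) + M * exp (-u) < 1
      have t1 : M*(1 + (η₁ - L)) ≤ lam * Real.exp η₁ := by
        rw [hconv η₁]; exact tangent M _ hM0.le
      have t2 : lam*(1 + (L - u)) ≤ M * Real.exp (-u) := by
        rw [hconv2 u]; exact tangent lam _ hlam.le
      nlinarith [hg, t1, t2, hnorm]
    -- sum the singleton inequalities
    have hsum : K*M^2*(u - L) + (K*M - M)*lam*(L - η₁) + M*lam*(L - u) < 0 := by
      have h1 : ∑ i : Fin k, (M^2*(u - L) + (M - μ i)*lam*(L - η₁) + μ i*lam*(L - u)) < 0 :=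
        Finset.sum_neg (fun i _ => hEi i) Finset.univ_nonempty
      have h2 : ∑ i : Fin k, (M^2*(u - L) + (M - μ i)*lam*(L - η₁) + μ i*lam*(L - u))
          = K*M^2*(u - L) + (K*M - M)*lam*(L - η₁) + M*lam*(L - u) := by
        rw [Finset.sum_add_distrib, Finset.sum_add_distrib]
        rw [Finset.sum_const, Finset.card_univ, Fintype.card_fin, nsmul_eq_mul]
        have e1 : ∑ i : Fin k, (M - μ i)*lam*(L - η₁)
            = (∑ i : Fin k, (M - μ i)) * (lam*(L - η₁)) := by
          rw [Finset.sum_mul]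
          apply Finset.sum_congr rfl
          intro i _; ring
        have e2 : ∑ i : Fin k, μ i*lam*(L - u) = (∑ i : Fin k, μ i) * (lam*(L - u)) := by
          rw [Finset.sum_mul]
          apply Finset.sum_congr rfl
          intro i _; ring
        rw [e1, e2, Finset.sum_sub_distrib, Finset.sum_const, Finset.card_univ,
          Fintype.card_fin, nsmul_eq_mul, ← hMdef, ← hK]
        ring
      linarith [h2 ▸ h1]
    -- combine
    have hc : (0:ℝ) < K*M^2 - lam*M - (K-1)*lam^2 := by
      have hid : K*M^2 - lam*M - (K-1)*lam^2 = (M - lam)*(K*M + (K-1)*lam) := by ring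
      rw [hid]
      exact mul_pos (by linarith) (by nlinarith [hKm1, hlam, hM0, hK2])
    have hcomb : (M + (K-1)*lam) * (K*M^2*(u - L) + (K*M - M)*lam*(L - η₁) + M*lam*(L - u))
        + (K*(K-1)*M*M) * (M*(η₁ - L) + lam*(L - u))
        = M*(K*M^2 - lam*M - (K-1)*lam^2)*(η₀ - K*L) := by
      rw [hu]; ring
    have hpos1 : (0:ℝ) < M + (K-1)*lam := by positivity
    have hpos2 : (0:ℝ) < K*(K-1)*M*M := by positivity
    have hlt : M*(K*M^2 - lam*M - (K-1)*lam^2)*(η₀ - K*L) < 0 := by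
      rw [← hcomb]
      have := mul_neg_of_pos_of_neg hpos1 hsum
      have := mul_neg_of_pos_of_neg hpos2 hEJ
      linarith
    nlinarith [hlt, mul_pos hM0 hc]
  -- ## Diagonal feasibility
  have hdiag : ∀ x : ℝ, 0 < x → x < L →
      ∀ U : Finset (Fin k), U.Nonempty → gamma2 k lam μ U (K*x) x < 1 := by
    intro x hx1 hx2 U hU
    have hy0 : (0:ℝ) < Real.exp x := Real.exp_pos x
    have hy1 : (1:ℝ) < Real.exp x := by
      calc (1:ℝ) = Real.exp 0 := (Real.exp_zero).symm
        _ < Real.exp x := Real.exp_lt_exp.mpr hx1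
    have hy2 : Real.exp x < M / lam := by
      rw [← hexpL]; exact Real.exp_lt_exp.mpr hx2
    have hly : lam * Real.exp x < M := by
      have := (lt_div_iff₀ hlam).mp hy2
      linarith
    have key : lam * Real.exp x + M * (Real.exp x)⁻¹ < 1 := by
      rw [show lam * Real.exp x + M * (Real.exp x)⁻¹
          = (lam * Real.exp x * Real.exp x + M) / Real.exp x by field_simp]
      rw [div_lt_one hy0]
      nlinarith [mul_neg_of_pos_of_neg (by linarith : (0:ℝ) < Real.exp x - 1)
        (by linarith : lam * Real.exp x - M < 0), hnorm]
    have hsumc : (∑ j ∈ Uᶜ, μ j) + ∑ j ∈ U, μ j = M := by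
      rw [hMdef]; exact Finset.sum_compl_add_sum U μ
    have harg : -(K*x) + ((k:ℝ) - 1) * x = -x := by rw [← hK]; ring
    have harg2 : K*x - ((k:ℝ) - 1) * x = x := by rw [← hK]; ring
    rw [gamma2, harg, harg2]
    have hne : Real.exp (-x) = (Real.exp x)⁻¹ := Real.exp_neg x
    have hcomb : (∑ j ∈ Uᶜ, μ j) * (Real.exp x)⁻¹ + (∑ j ∈ U, μ j) * (Real.exp x)⁻¹
        = M * (Real.exp x)⁻¹ := by rw [← add_mul, hsumc]
    split_ifs with hcard
    · rw [hne]
      linarith [key, hcomb]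
    · rw [hne]
      linarith [key, hcomb]
  -- basic sup facts
  have hbdd : ∀ τ : ℝ, BddAbove {η₀ : ℝ | ∃ η₁ ≤ τ,
      ∀ U : Finset (Fin k), U.Nonempty → gamma2 k lam μ U η₀ η₁ < 1} := by
    intro τ
    exact ⟨K*L, fun η₀ hη => by
      obtain ⟨η₁, _, h⟩ := hη
      exact (hub η₀ η₁ h).le⟩
  have hmem : ∀ τ x : ℝ, 0 < x → x < L → x ≤ τ →
      K*x ∈ {η₀ : ℝ | ∃ η₁ ≤ τ,
        ∀ U : Finset (Fin k), U.Nonempty → gamma2 k lam μ U η₀ η₁ < 1} := by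
    intro τ x hx1 hx2 hx3
    exact ⟨x, hx3, hdiag x hx1 hx2⟩
  -- positivity of t
  have hK0 : (0:ℝ) < K := by linarith
  have hpos : ∀ ℓ, 0 < t ℓ := by
    intro ℓ
    induction ℓ with
    | zero => rw [ht0]; exact hε
    | succ n ih =>
      rw [ht n]
      apply div_pos _ hKm1
      rw [ha n]
      have hx1 : 0 < min (t n) L / 2 := by
        have := lt_min ih hL0; linarith
      have hx2 : min (t n) L / 2 < L := by
        have := min_le_right (t n) L; linarith
      have hx3 : min (t n) L / 2 ≤ t n := by
        have := min_le_left (t n) L; linarith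
      calc (0:ℝ) < K * (min (t n) L / 2) := by positivity
        _ ≤ _ := le_csSup (hbdd (t n)) (hmem (t n) _ hx1 hx2 hx3)
  -- growth step below L
  have hstep_low : ∀ ℓ, t ℓ < L → K/(K-1) * t ℓ ≤ t (ℓ+1) := by
    intro ℓ hlt
    have h1 : K * t ℓ ≤ a (ℓ+1) := by
      rw [ha ℓ]
      exact le_csSup (hbdd (t ℓ)) (hmem (t ℓ) (t ℓ) (hpos ℓ) hlt le_rfl)
    rw [ht ℓ]
    rw [div_mul_eq_mul_div]
    exact div_le_div_of_nonneg_right h1 hKm1.le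
  -- stabilization above L
  have hstep_high : ∀ ℓ, L ≤ t ℓ → a (ℓ+1) = K*L := by
    intro ℓ hge
    rw [ha ℓ]
    apply le_antisymm
    · apply csSup_le
      · exact ⟨K*(L/2), hmem (t ℓ) (L/2) (by linarith) (by linarith) (by linarith)⟩
      · intro η₀ hη
        obtain ⟨η₁, _, h⟩ := hη
        exact (hub η₀ η₁ h).le
    · by_contra h'
      push_neg at h'
      set c := sSup {η₀ : ℝ | ∃ η₁ ≤ t ℓ,
        ∀ U : Finset (Fin k), U.Nonempty → gamma2 k lam μ U η₀ η₁ < 1} with hc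
      have hc0 : K*(L/2) ≤ c :=
        le_csSup (hbdd (t ℓ)) (hmem (t ℓ) (L/2) (by linarith) (by linarith) (by linarith))
      have hcK : c/K < L := by
        rw [div_lt_iff₀ hK0]; linarith [h']
      have hcK0 : 0 < c/K := by
        apply div_pos _ hK0; nlinarith
      set x := (c/K + L)/2 with hxdef
      have hx1 : 0 < x := by rw [hxdef]; linarith
      have hx2 : x < L := by rw [hxdef]; linarith
      have hx3 : x ≤ t ℓ := by linarith
      have hle : K*x ≤ c := le_csSup (hbdd (t ℓ)) (hmem (t ℓ) x hx1 hx2 hx3)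
      have hgt : c < K*x := by
        have : c/K < x := by rw [hxdef]; linarith
        calc c = K * (c/K) := by field_simp
          _ < K * x := by exact mul_lt_mul_of_pos_left this hK0
      linarith
  have hq1 : (1:ℝ) < K/(K-1) := (one_lt_div hKm1).mpr (by linarith)
  -- t reaches L
  have treach : ∃ N, L ≤ t N := by
    by_contra h'
    push_neg at h'
    have grow : ∀ ℓ, (K/(K-1))^ℓ * ε ≤ t ℓ := by
      intro ℓ
      induction ℓ with
      | zero => simp [ht0]
      | succ n ih =>
        have h1 := hstep_low n (h' n)
        have h2 : (K/(K-1))^(n+1) * ε = (K/(K-1)) * ((K/(K-1))^n * ε) := by ring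
        rw [h2]
        calc (K/(K-1)) * ((K/(K-1))^n * ε) ≤ (K/(K-1)) * t n :=
              mul_le_mul_of_nonneg_left ih (by linarith)
          _ ≤ t (n+1) := h1
    obtain ⟨n, hn⟩ := pow_unbounded_of_one_lt (L/ε) hq1
    have : L < (K/(K-1))^n * ε := by
      rw [div_lt_iff₀ hε] at hn; linarith
    linarith [grow n, h' n]
  obtain ⟨N, hN⟩ := treach
  -- eventually constant
  have hstable : ∀ m, a (N+1+m) = K*L ∧ t (N+1+m) = K/(K-1)*L := by
    intro m
    induction m with
    | zero =>
      have h1 : a (N+1) = K*L := hstep_high N hN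
      refine ⟨by simpa using h1, ?_⟩
      show t (N+1) = _
      rw [ht N, h1]
      field_simp
    | succ m ih =>
      have htm : L ≤ t (N+1+m) := by
        rw [ih.2]
        nlinarith [hq1, hL0]
      have h1 : a (N+1+m+1) = K*L := hstep_high _ htm
      have e : N+1+(m+1) = (N+1+m)+1 := by omega
      constructor
      · rw [e]; exact h1
      · rw [e, ht, h1]
        field_simp
  have hfa : a =ᶠ[atTop] (fun _ => K*L) := by
    rw [EventuallyEq, eventually_atTop]
    refine ⟨N+1, fun m hm => ?_⟩
    obtain ⟨j, rfl⟩ : ∃ j, m = N+1+j := ⟨m-(N+1), by omega⟩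
    exact (hstable j).1
  have hft : t =ᶠ[atTop] (fun _ => K/(K-1)*L) := by
    rw [EventuallyEq, eventually_atTop]
    refine ⟨N+1, fun m hm => ?_⟩
    obtain ⟨j, rfl⟩ : ∃ j, m = N+1+j := ⟨m-(N+1), by omega⟩
    exact (hstable j).2
  rw [hinv]
  constructor
  · exact Tendsto.congr' hfa.symm tendsto_const_nhds
  · exact Tendsto.congr' hft.symm tendsto_const_nhds
end

section
/- Let f : H → ℝ be defined by f(h) = (1/2) Σ_{1≤j<m≤k} (h_j − h_m)². Then for every h ∈ H, Σ_{h' ∈ H} p_{h,h'} f(h') ≤ f(h) + (λ − Σ_{j=1}^k μ_j)(Σ_{j=1}^k h_j) + (k−1)/2; since λ < Σ_{j=1}^k μ_j, this is a Foster–Lyapunov drift inequality whose negative-drift region is all of H outside the finite set {h ∈ H : Σ_j h_j ≤ (k−1+ε) / (2(Σ_{j} μ_j − λ))} for any ε > 0. -/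
open Filter Topology

noncomputable section

/-- `S(h) = {i ∈ J : h_i = 0}`, the set of coordinates where `h` vanishes. -/
def sZero (k : ℕ) (h : Fin k → ℕ) : Finset (Fin k) :=
  Finset.univ.filter (fun i => h i = 0)

/-- The QBD block `A_{+1}`: `[A_{+1}]_{h, h−𝟙+e_i} = λ` when `|S(h)| = 1` and `i ∈ S(h)`. -/
def Aplus (k : ℕ) (lam : ℝ) (h h' : Fin k → ℕ) : ℝ :=
  if (sZero k h).card = 1 ∧ h' = fun j => h j - 1 then lam else 0

/-- The QBD block `A_0`: `[A_0]_{h, h+e_i} = λ/|S(h)|` when `|S(h)| ≥ 2`, `i ∈ S(h)`, and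
`[A_0]_{h, h−e_j} = μ_j` for `j ∉ S(h)`. -/
def Azero (k : ℕ) (lam : ℝ) (μ : Fin k → ℝ) (h h' : Fin k → ℕ) : ℝ :=
  (if 2 ≤ (sZero k h).card then
      ∑ i ∈ sZero k h,
        (if h' = Function.update h i 1 then lam / (sZero k h).card else 0)
    else 0)
  + ∑ j ∈ (sZero k h)ᶜ, (if h' = Function.update h j (h j - 1) then μ j else 0)

/-- The QBD block `A_{−1}`: `[A_{−1}]_{h, h+𝟙−e_i} = μ_i` for `i ∈ S(h)`. -/
def Aminus (k : ℕ) (μ : Fin k → ℝ) (h h' : Fin k → ℕ) : ℝ :=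
  ∑ i ∈ sZero k h, (if h' = (fun j => if j = i then 0 else h j + 1) then μ i else 0)

/-- `A_*(z) = z⁻¹ A_{−1} + A_0 + z A_{+1}`. -/
def Astar (k : ℕ) (lam : ℝ) (μ : Fin k → ℝ) (z : ℝ) (h h' : Fin k → ℕ) : ℝ :=
  z⁻¹ * Aminus k μ h h' + Azero k lam μ h h' + z * Aplus k lam h h'

end

noncomputable section

/-- The twisted transition matrix `p` on `H` (with `ρ = λ/Σμ`):
for `|S(h)| = 1`, `S(h) = {i}`: `p_{h,h−𝟙+e_i} = λρ⁻¹`, `p_{h,h+𝟙−e_i} = μ_i ρ`,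
`p_{h,h−e_j} = μ_j ρ` for `j ∉ S(h)`; for `|S(h)| ≥ 2`: `p_{h,h+e_i} = (λ/|S(h)|)ρ⁻¹`
and `p_{h,h+𝟙−e_i} = μ_i ρ` for `i ∈ S(h)`, `p_{h,h−e_j} = μ_j ρ` for `j ∉ S(h)`. -/
def pDrift (k : ℕ) (lam : ℝ) (μ : Fin k → ℝ) (h h' : Fin k → ℕ) : ℝ :=
  (if (sZero k h).card = 1 then
      (if h' = fun j => h j - 1 then lam * (rho k lam μ)⁻¹ else 0)
    else
      ∑ i ∈ sZero k h,
        (if h' = Function.update h i 1 then lam / (sZero k h).card * (rho k lam μ)⁻¹ else 0))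
  + ∑ i ∈ sZero k h,
      (if h' = (fun j => if j = i then 0 else h j + 1) then μ i * rho k lam μ else 0)
  + ∑ j ∈ (sZero k h)ᶜ,
      (if h' = Function.update h j (h j - 1) then μ j * rho k lam μ else 0)

/-- The Lyapunov function `f(h) = (1/2) Σ_{j<m} (h_j − h_m)²`. -/
def fLyap (k : ℕ) (h : Fin k → ℕ) : ℝ :=
  (1 / 2) * ∑ j : Fin k, ∑ m ∈ Finset.univ.filter (fun m => j < m),
    ((h j : ℝ) - (h m : ℝ)) ^ 2

end

/-! ### Auxiliary lemmas -/

lemma summable_ite_mul {α : Type*} [DecidableEq α] (t : α) (w : ℝ) (g : α → ℝ) :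
    Summable (fun x => (if x = t then w else 0) * g x) := by
  apply summable_of_ne_finset_zero (s := {t})
  intro b hb
  simp at hb
  simp [hb]

lemma tsum_ite_mul {α : Type*} [DecidableEq α] (t : α) (w : ℝ) (g : α → ℝ) :
    ∑' x, (if x = t then w else 0) * g x = w * g t := by
  rw [tsum_eq_single t]
  · simp
  · intro b hb; simp [hb]

lemma summable_sum_ite_mul {α ι : Type*} [DecidableEq α] (s : Finset ι) (t : ι → α)
    (w : ι → ℝ) (g : α → ℝ) :
    Summable (fun x => (∑ i ∈ s, if x = t i then w i else 0) * g x) := by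
  have : (fun x => (∑ i ∈ s, if x = t i then w i else 0) * g x)
      = fun x => ∑ i ∈ s, (if x = t i then w i else 0) * g x := by
    funext x; rw [Finset.sum_mul]
  rw [this]
  exact summable_sum (fun i _ => summable_ite_mul (t i) (w i) g)

lemma tsum_sum_ite_mul {α ι : Type*} [DecidableEq α] (s : Finset ι) (t : ι → α)
    (w : ι → ℝ) (g : α → ℝ) :
    ∑' x, (∑ i ∈ s, if x = t i then w i else 0) * g x = ∑ i ∈ s, w i * g (t i) := by
  have : (fun x => (∑ i ∈ s, if x = t i then w i else 0) * g x)
      = fun x => ∑ i ∈ s, (if x = t i then w i else 0) * g x := by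
    funext x; rw [Finset.sum_mul]
  rw [this, Summable.tsum_finsetSum (fun i _ => summable_ite_mul (t i) (w i) g)]
  exact Finset.sum_congr rfl (fun i _ => tsum_ite_mul (t i) (w i) g)

lemma sq_pairs_closed {k : ℕ} (x : Fin k → ℝ) :
    ∑ j : Fin k, ∑ m ∈ Finset.univ.filter (fun m => j < m), (x j - x m) ^ 2
      = (k : ℝ) * (∑ j, (x j)^2) - (∑ j, x j)^2 := by
  have h1 : ∀ j : Fin k, ∑ m ∈ Finset.univ.filter (fun m => j < m), (x j - x m) ^ 2
      = ∑ m : Fin k, (if j < m then (x j - x m)^2 else 0) := by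
    intro j; rw [Finset.sum_filter]
  have key : ∑ j : Fin k, ∑ m : Fin k, (x j - x m)^2
      = 2 * ∑ j : Fin k, ∑ m : Fin k, (if j < m then (x j - x m)^2 else 0) := by
    have tri : ∀ j m : Fin k, (x j - x m)^2
        = (if j < m then (x j - x m)^2 else 0) + (if m < j then (x j - x m)^2 else 0) := by
      intro j m
      rcases lt_trichotomy j m with hlt | heq | hgt
      · simp [hlt, not_lt_of_gt hlt]
      · simp [heq]
      · simp [hgt, not_lt_of_gt hgt]
    calc ∑ j : Fin k, ∑ m : Fin k, (x j - x m)^2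
        = ∑ j : Fin k, ∑ m : Fin k, ((if j < m then (x j - x m)^2 else 0)
            + (if m < j then (x j - x m)^2 else 0)) := by
          exact Finset.sum_congr rfl (fun j _ => Finset.sum_congr rfl (fun m _ => tri j m))
      _ = (∑ j : Fin k, ∑ m : Fin k, (if j < m then (x j - x m)^2 else 0))
            + ∑ j : Fin k, ∑ m : Fin k, (if m < j then (x j - x m)^2 else 0) := by
          rw [← Finset.sum_add_distrib]
          exact Finset.sum_congr rfl (fun j _ => by rw [← Finset.sum_add_distrib])
      _ = 2 * ∑ j : Fin k, ∑ m : Fin k, (if j < m then (x j - x m)^2 else 0) := by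
          rw [two_mul]
          congr 1
          rw [Finset.sum_comm]
          exact Finset.sum_congr rfl (fun j _ => Finset.sum_congr rfl (fun m _ => by
            rw [show (x m - x j)^2 = (x j - x m)^2 by ring]))
  have expand : ∑ j : Fin k, ∑ m : Fin k, (x j - x m)^2
      = 2 * ((k : ℝ) * (∑ j, (x j)^2)) - 2 * (∑ j, x j)^2 := by
    have : ∀ j m : Fin k, (x j - x m)^2 = (x j)^2 + (x m)^2 - 2 * (x j * x m) := by
      intro j m; ring
    calc ∑ j : Fin k, ∑ m : Fin k, (x j - x m)^2
        = ∑ j : Fin k, ∑ m : Fin k, ((x j)^2 + (x m)^2 - 2 * (x j * x m)) :=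
          Finset.sum_congr rfl (fun j _ => Finset.sum_congr rfl (fun m _ => this j m))
      _ = ∑ j : Fin k, ((k : ℝ) * (x j)^2 + (∑ m, (x m)^2) - 2 * (x j * ∑ m, x m)) := by
          refine Finset.sum_congr rfl (fun j _ => ?_)
          rw [Finset.sum_sub_distrib, Finset.sum_add_distrib, Finset.sum_const,
            Finset.card_univ, Fintype.card_fin, ← Finset.mul_sum, ← Finset.mul_sum]
          ring
      _ = 2 * ((k : ℝ) * (∑ j, (x j)^2)) - 2 * (∑ j, x j)^2 := by
          rw [Finset.sum_sub_distrib, Finset.sum_add_distrib, ← Finset.mul_sum,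
            ← Finset.mul_sum, ← Finset.sum_mul, Finset.sum_const, Finset.card_univ,
            Fintype.card_fin]
          ring
  have h2 : ∑ j : Fin k, ∑ m ∈ Finset.univ.filter (fun m => j < m), (x j - x m) ^ 2
      = ∑ j : Fin k, ∑ m : Fin k, (if j < m then (x j - x m)^2 else 0) :=
    Finset.sum_congr rfl (fun j _ => h1 j)
  rw [h2]
  have := key
  rw [expand] at this
  linarith

lemma fLyap_closed {k : ℕ} (h : Fin k → ℕ) :
    fLyap k h = ((k : ℝ) * (∑ j, ((h j : ℝ))^2) - (∑ j, (h j : ℝ))^2) / 2 := by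
  unfold fLyap
  rw [sq_pairs_closed]
  ring

/-- Sum of a function that is `a` at `i` and `b j` elsewhere. -/
lemma sum_if_point {k : ℕ} (i : Fin k) (a : ℝ) (b : Fin k → ℝ) :
    ∑ j, (if j = i then a else b j) = (∑ j, b j) + a - b i := by
  have : ∀ j : Fin k, (if j = i then a else b j)
      = b j + (if j = i then a - b j else 0) := by
    intro j; split <;> simp_all
  rw [Finset.sum_congr rfl (fun j _ => this j), Finset.sum_add_distrib,
    Finset.sum_ite_eq' Finset.univ i (fun j => a - b j)]
  simp
  ring

/-- Generic fLyap evaluation for a target whose cast is `if j = i then a else b j`. -/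
lemma fLyap_of_cast {k : ℕ} (t : Fin k → ℕ) (i : Fin k) (a : ℝ) (b : Fin k → ℝ)
    (hc : ∀ j, ((t j : ℝ)) = if j = i then a else b j) :
    fLyap k t = ((k : ℝ) * ((∑ j, (b j)^2) + a^2 - (b i)^2)
        - ((∑ j, b j) + a - b i)^2) / 2 := by
  rw [fLyap_closed]
  have h1 : ∑ j, ((t j : ℝ)) = (∑ j, b j) + a - b i := by
    rw [Finset.sum_congr rfl (fun j _ => hc j), sum_if_point]
  have h2 : ∑ j, ((t j : ℝ))^2 = (∑ j, (b j)^2) + a^2 - (b i)^2 := by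
    have : ∀ j : Fin k, ((t j : ℝ))^2 = if j = i then a^2 else (b j)^2 := by
      intro j; rw [hc j]; split <;> rfl
    rw [Finset.sum_congr rfl (fun j _ => this j), sum_if_point]
  rw [h1, h2]

/-! Target evaluations. Notation: `S = ∑ hⱼ`, `Q = ∑ hⱼ²`. -/

section targets
variable {k : ℕ} (h : Fin k → ℕ)

lemma sum_shift_one : (∑ j : Fin k, ((h j : ℝ) + 1)) = (∑ j, (h j : ℝ)) + k := by
  rw [Finset.sum_add_distrib]; simp

lemma sum_shift_one_sq :
    (∑ j : Fin k, ((h j : ℝ) + 1)^2)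
      = (∑ j, ((h j : ℝ))^2) + 2 * (∑ j, (h j : ℝ)) + k := by
  have : ∀ j : Fin k, ((h j : ℝ) + 1)^2 = ((h j : ℝ))^2 + 2 * (h j : ℝ) + 1 := by
    intro j; ring
  rw [Finset.sum_congr rfl (fun j _ => this j), Finset.sum_add_distrib,
    Finset.sum_add_distrib, ← Finset.mul_sum]
  simp

lemma sum_shift_neg_one : (∑ j : Fin k, ((h j : ℝ) - 1)) = (∑ j, (h j : ℝ)) - k := by
  rw [Finset.sum_sub_distrib]; simp

lemma sum_shift_neg_one_sq :
    (∑ j : Fin k, ((h j : ℝ) - 1)^2)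
      = (∑ j, ((h j : ℝ))^2) - 2 * (∑ j, (h j : ℝ)) + k := by
  have : ∀ j : Fin k, ((h j : ℝ) - 1)^2 = ((h j : ℝ))^2 - 2 * (h j : ℝ) + 1 := by
    intro j; ring
  rw [Finset.sum_congr rfl (fun j _ => this j), Finset.sum_add_distrib,
    Finset.sum_sub_distrib, ← Finset.mul_sum]
  simp

/-- `f(h − 𝟙 + e_i)` when `S(h) = {i}`. -/
lemma fLyap_A1 (i : Fin k) (hi : h i = 0) (hothers : ∀ j, j ≠ i → h j ≠ 0) :
    fLyap k (fun j => h j - 1)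
      = fLyap k h - (∑ j, (h j : ℝ)) + ((k : ℝ) - 1) / 2 := by
  have hc : ∀ j, (((h j - 1 : ℕ) : ℝ)) = if j = i then 0 else (h j : ℝ) - 1 := by
    intro j
    by_cases hj : j = i
    · simp [hj, hi]
    · have : 1 ≤ h j := Nat.one_le_iff_ne_zero.mpr (hothers j hj)
      simp [hj]
      push_cast [Nat.cast_sub this]
      ring
  rw [fLyap_of_cast (fun j => h j - 1) i 0 (fun j => (h j : ℝ) - 1) hc,
    sum_shift_neg_one, sum_shift_neg_one_sq, fLyap_closed]
  have hxi : (h i : ℝ) = 0 := by exact_mod_cast hi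
  rw [hxi]
  ring

/-- `f(h + e_i)` when `h i = 0` (here as `Function.update h i 1`). -/
lemma fLyap_A2 (i : Fin k) (hi : h i = 0) :
    fLyap k (Function.update h i 1)
      = fLyap k h - (∑ j, (h j : ℝ)) + ((k : ℝ) - 1) / 2 := by
  have hc : ∀ j, ((Function.update h i 1 j : ℕ) : ℝ) = if j = i then 1 else (h j : ℝ) := by
    intro j
    rw [Function.update_apply]
    split <;> simp
  rw [fLyap_of_cast _ i 1 (fun j => (h j : ℝ)) hc, fLyap_closed]
  have hxi : (h i : ℝ) = 0 := by exact_mod_cast hi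
  rw [hxi]
  ring

/-- `f(h + 𝟙 − e_i)` when `h i = 0`. -/
lemma fLyap_B (i : Fin k) (hi : h i = 0) :
    fLyap k (fun j => if j = i then 0 else h j + 1)
      = fLyap k h + (∑ j, (h j : ℝ)) + ((k : ℝ) - 1) / 2 := by
  have hc : ∀ j, (((if j = i then 0 else h j + 1 : ℕ)) : ℝ)
      = if j = i then 0 else (h j : ℝ) + 1 := by
    intro j; split <;> push_cast <;> simp
  rw [fLyap_of_cast _ i 0 (fun j => (h j : ℝ) + 1) hc, sum_shift_one, sum_shift_one_sq,
    fLyap_closed]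
  have hxi : (h i : ℝ) = 0 := by exact_mod_cast hi
  rw [hxi]
  ring

/-- `f(h − e_j)` when `h j ≠ 0`. -/
lemma fLyap_C (i : Fin k) (hi : h i ≠ 0) :
    fLyap k (Function.update h i (h i - 1))
      = fLyap k h + (∑ j, (h j : ℝ)) - (k : ℝ) * (h i : ℝ) + ((k : ℝ) - 1) / 2 := by
  have h1 : 1 ≤ h i := Nat.one_le_iff_ne_zero.mpr hi
  have hc : ∀ j, ((Function.update h i (h i - 1) j : ℕ) : ℝ)
      = if j = i then (h i : ℝ) - 1 else (h j : ℝ) := by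
    intro j
    rw [Function.update_apply]
    split
    · push_cast [Nat.cast_sub h1]; ring
    · rfl
  rw [fLyap_of_cast _ i ((h i : ℝ) - 1) (fun j => (h j : ℝ)) hc, fLyap_closed]
  ring
end targets

lemma drift_eq (k : ℕ) (lam : ℝ) (μ : Fin k → ℝ)
    (hlam : lam ≠ 0) (hM : (∑ i, μ i) ≠ 0)
    (hnorm : lam + ∑ i, μ i = 1)
    (h : Fin k → ℕ) (hne : (sZero k h).Nonempty) :
    ∑' h' : Fin k → ℕ, pDrift k lam μ h h' * fLyap k h'
      = fLyap k h + (lam - ∑ j, μ j) * (∑ j, (h j : ℝ)) + ((k : ℝ) - 1) / 2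
        - (k : ℝ) * rho k lam μ * ∑ j ∈ (sZero k h)ᶜ, μ j * (h j : ℝ) := by
  classical
  set s := sZero k h with hs
  set ρ := rho k lam μ with hρdef
  set E := fLyap k h with hE
  set S := ∑ j, (h j : ℝ) with hS
  set D := ((k : ℝ) - 1) / 2 with hD
  set M := ∑ i, μ i with hMdef
  -- the three pieces
  set F1 : (Fin k → ℕ) → ℝ := fun h' =>
    (if s.card = 1 then
        (if h' = fun j => h j - 1 then lam * ρ⁻¹ else 0)
      else
        ∑ i ∈ s, (if h' = Function.update h i 1 then lam / s.card * ρ⁻¹ else 0)) with hF1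
  set F2 : (Fin k → ℕ) → ℝ := fun h' =>
    ∑ i ∈ s, (if h' = (fun j => if j = i then 0 else h j + 1) then μ i * ρ else 0) with hF2
  set F3 : (Fin k → ℕ) → ℝ := fun h' =>
    ∑ j ∈ sᶜ, (if h' = Function.update h j (h j - 1) then μ j * ρ else 0) with hF3
  have hps : ∀ h', pDrift k lam μ h h' = F1 h' + F2 h' + F3 h' := fun h' => rfl
  have hsum1 : Summable (fun h' => F1 h' * fLyap k h') := by
    by_cases hc : s.card = 1
    · simp only [hF1, hc, if_true]
      exact summable_ite_mul _ _ _
    · simp only [hF1, hc, if_false]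
      exact summable_sum_ite_mul _ _ _ _
  have hsum2 : Summable (fun h' => F2 h' * fLyap k h') := summable_sum_ite_mul _ _ _ _
  have hsum3 : Summable (fun h' => F3 h' * fLyap k h') := summable_sum_ite_mul _ _ _ _
  have hsplit : ∑' h' : Fin k → ℕ, pDrift k lam μ h h' * fLyap k h'
      = (∑' h', F1 h' * fLyap k h') + (∑' h', F2 h' * fLyap k h')
        + (∑' h', F3 h' * fLyap k h') := by
    have : (fun h' => pDrift k lam μ h h' * fLyap k h')
        = fun h' => F1 h' * fLyap k h' + F2 h' * fLyap k h' + F3 h' * fLyap k h' := by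
      funext h'; rw [hps h']; ring
    rw [this, Summable.tsum_add (hsum1.add hsum2) hsum3, Summable.tsum_add hsum1 hsum2]
  -- facts about membership in s
  have hmem : ∀ i, i ∈ s ↔ h i = 0 := by
    intro i; simp [hs, sZero]
  have hmemc : ∀ j, j ∈ sᶜ ↔ h j ≠ 0 := by
    intro j; simp [hs, sZero]
  have hρM : ρ * M = lam := by
    rw [hρdef, rho, ← hMdef]; field_simp
  have hlaminv : lam * ρ⁻¹ = M := by
    rw [hρdef, rho, ← hMdef, inv_div]
    field_simp
  -- piece 1
  have hT1 : (∑' h', F1 h' * fLyap k h') = M * (E - S + D) := by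
    by_cases hc : s.card = 1
    · obtain ⟨i, hi⟩ := Finset.card_eq_one.mp hc
      have hzi : h i = 0 := (hmem i).mp (by rw [hi]; exact Finset.mem_singleton_self i)
      have hoth : ∀ j, j ≠ i → h j ≠ 0 := by
        intro j hj hzj
        have : j ∈ s := (hmem j).mpr hzj
        rw [hi, Finset.mem_singleton] at this
        exact hj this
      simp only [hF1, hc, if_true]
      rw [tsum_ite_mul, fLyap_A1 h i hzi hoth, hlaminv, ← hE, ← hS, ← hD]
    · simp only [hF1, hc, if_false]
      rw [tsum_sum_ite_mul]
      have : ∀ i ∈ s, lam / s.card * ρ⁻¹ * fLyap k (Function.update h i 1)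
          = lam / s.card * ρ⁻¹ * (E - S + D) := by
        intro i hi
        rw [fLyap_A2 h i ((hmem i).mp hi), ← hE, ← hS, ← hD]
      rw [Finset.sum_congr rfl this, Finset.sum_const, nsmul_eq_mul]
      have hcard0 : (s.card : ℝ) ≠ 0 := by
        have := Finset.card_pos.mpr hne
        positivity
      calc (s.card : ℝ) * (lam / s.card * ρ⁻¹ * (E - S + D))
          = ((s.card : ℝ) / s.card) * (lam * ρ⁻¹ * (E - S + D)) := by ring
        _ = lam * ρ⁻¹ * (E - S + D) := by rw [div_self hcard0, one_mul]
        _ = M * (E - S + D) := by rw [hlaminv]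
  -- piece 2
  have hT2 : (∑' h', F2 h' * fLyap k h') = (∑ i ∈ s, μ i) * (ρ * (E + S + D)) := by
    simp only [hF2]
    rw [tsum_sum_ite_mul]
    have : ∀ i ∈ s, μ i * ρ * fLyap k (fun j => if j = i then 0 else h j + 1)
        = μ i * (ρ * (E + S + D)) := by
      intro i hi
      rw [fLyap_B h i ((hmem i).mp hi), ← hE, ← hS, ← hD]
      ring
    rw [Finset.sum_congr rfl this, ← Finset.sum_mul]
  -- piece 3
  have hT3 : (∑' h', F3 h' * fLyap k h')
      = (∑ j ∈ sᶜ, μ j) * (ρ * (E + S + D))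
        - (k : ℝ) * ρ * ∑ j ∈ sᶜ, μ j * (h j : ℝ) := by
    simp only [hF3]
    rw [tsum_sum_ite_mul]
    have : ∀ j ∈ sᶜ, μ j * ρ * fLyap k (Function.update h j (h j - 1))
        = μ j * (ρ * (E + S + D)) - (k : ℝ) * ρ * (μ j * (h j : ℝ)) := by
      intro j hj
      rw [fLyap_C h j ((hmemc j).mp hj), ← hE, ← hS, ← hD]
      ring
    rw [Finset.sum_congr rfl this, Finset.sum_sub_distrib, ← Finset.sum_mul,
      ← Finset.mul_sum]
  rw [hsplit, hT1, hT2, hT3]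
  have hcompl : (∑ i ∈ s, μ i) + ∑ j ∈ sᶜ, μ j = M := Finset.sum_add_sum_compl s μ
  linear_combination (ρ * (E + S + D)) * hcompl + (E + S + D) * hρM + (E + D) * hnorm

/-- **Foster–Lyapunov drift inequality** for the twisted chain `p` with
`f(h) = (1/2)Σ_{j<m}(h_j−h_m)²`: for every `h ∈ H`,
`Σ_{h'} p_{h,h'} f(h') ≤ f(h) + (λ − Σ_j μ_j)(Σ_j h_j) + (k−1)/2`; since `λ < Σ_j μ_j`,
the drift is strictly negative outside the finite set
`{h ∈ H : Σ_j h_j ≤ (k−1+ε)/(2(Σ_j μ_j − λ))}`, for any `ε > 0`. -/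
theorem foster_lyapunov_drift
    (k : ℕ) (hk : 2 ≤ k) (lam : ℝ) (μ : Fin k → ℝ)
    (hlam : 0 < lam) (hμ : ∀ i, 0 < μ i)
    (hnorm : lam + ∑ i, μ i = 1)
    (hρ : rho k lam μ < 1)
    :
    (∀ h : Fin k → ℕ, (∃ i, h i = 0) →
      (∑' h' : Fin k → ℕ, pDrift k lam μ h h' * fLyap k h')
        ≤ fLyap k h + (lam - ∑ j, μ j) * (∑ j, (h j : ℝ)) + ((k : ℝ) - 1) / 2) ∧
    (∀ ε : ℝ, 0 < ε →
      {h : Fin k → ℕ | (∃ i, h i = 0) ∧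
          (∑ j, (h j : ℝ)) ≤ ((k : ℝ) - 1 + ε) / (2 * ((∑ j, μ j) - lam))}.Finite ∧
      ∀ h : Fin k → ℕ, (∃ i, h i = 0) →
        ((k : ℝ) - 1 + ε) / (2 * ((∑ j, μ j) - lam)) < ∑ j, (h j : ℝ) →
        (∑' h' : Fin k → ℕ, pDrift k lam μ h h' * fLyap k h') < fLyap k h) := by
  have hM : 0 < ∑ i, μ i :=
    Finset.sum_pos (fun i _ => hμ i)
      (Finset.univ_nonempty_iff.mpr ⟨⟨0, by omega⟩⟩)
  have hρpos : 0 < rho k lam μ := div_pos hlam hM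
  have hlamlt : lam < ∑ i, μ i := by
    have : lam / ∑ i, μ i < 1 := hρ
    exact (div_lt_one hM).mp this
  have key : ∀ h : Fin k → ℕ, (∃ i, h i = 0) →
      (∑' h' : Fin k → ℕ, pDrift k lam μ h h' * fLyap k h')
        ≤ fLyap k h + (lam - ∑ j, μ j) * (∑ j, (h j : ℝ)) + ((k : ℝ) - 1) / 2 := by
    rintro h ⟨i, hi⟩
    have hne : (sZero k h).Nonempty := ⟨i, by simp [sZero, hi]⟩
    rw [drift_eq k lam μ hlam.ne' hM.ne' hnorm h hne]
    have hnn : 0 ≤ (k : ℝ) * rho k lam μ * ∑ j ∈ (sZero k h)ᶜ, μ j * (h j : ℝ) := by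
      apply mul_nonneg (mul_nonneg (by positivity) hρpos.le)
      exact Finset.sum_nonneg (fun j _ => mul_nonneg (hμ j).le (by positivity))
    linarith
  refine ⟨key, fun ε hε => ⟨?_, ?_⟩⟩
  · -- finiteness
    set C : ℝ := ((k : ℝ) - 1 + ε) / (2 * ((∑ j, μ j) - lam)) with hC
    apply Set.Finite.subset
      (Set.finite_Icc (fun _ : Fin k => 0) (fun _ => Nat.floor C))
    rintro h ⟨-, hle⟩
    refine ⟨fun j => Nat.zero_le _, fun j => Nat.le_floor ?_⟩
    refine le_trans ?_ hle
    exact Finset.single_le_sum (f := fun j => ((h j : ℝ)))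
      (fun i _ => by positivity) (Finset.mem_univ j)
  · -- strict drift
    intro h hex hgt
    have h1 := key h hex
    have h2 : ((k : ℝ) - 1 + ε) < (∑ j, (h j : ℝ)) * (2 * ((∑ j, μ j) - lam)) :=
      (div_lt_iff₀ (by linarith : (0:ℝ) < 2 * ((∑ j, μ j) - lam))).mp hgt
    have h3 : (lam - ∑ j, μ j) * (∑ j, (h j : ℝ))
        = -((∑ j, (h j : ℝ)) * (2 * ((∑ j, μ j) - lam))) / 2 := by ring
    linarith
end
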